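/- Let G=(V,E) be a finite simple graph, C* ⊆ V a maximum independent set, and suppose each vertex v ∈ T := {v : deg(v) ≥ Δ} \ C* is independently 'bad' with probability at most exp(−2 ε² deg(v)), where Δ ≥ 3 log(1/ε)/ε² and 0 < ε ≤ 1/4. Then the expected number of bad vertices is at most ε · α(G). -/

import Mathlib

/-!
A vertex `v` with `deg v = x ≥ Δ` is bad with probability at most `exp(-2ε²x) = 1/E²`, where
`E = exp(ε²x)`. The choice of `Δ` gives `E ≥ ε⁻³`, and `E ≥ 1 + ε²x`, so
`E² ≥ ε⁻³ + x/ε ≥ (1 + x)/ε`. By linearity of expectation the expected number of bad vertices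
is therefore at most `ε ∑_v 1/(1 + deg v)`, and the Caro–Wei bound `∑_v 1/(1 + deg v) ≤ α(G)`
finishes, since `α(G) = |C|`.
-/

open MeasureTheory Finset ProbabilityTheory

lemma exp_neg_two_mul_le_div_one_add {ε x : ℝ} (hε0 : 0 < ε) (hε1 : ε ≤ 1)
    (hx : 3 * Real.log (1 / ε) / ε ^ 2 ≤ x) :
    Real.exp (-2 * ε ^ 2 * x) ≤ ε / (1 + x) := by
  have hlog : 3 * Real.log (1 / ε) ≤ ε ^ 2 * x := by
    rwa [div_le_iff₀' (by positivity)] at hx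
  have hx0 : 0 ≤ x := by
    refine (mul_nonneg_iff_of_pos_left (by positivity : 0 < ε ^ 2)).mp ?_
    have : 0 ≤ Real.log (1 / ε) := Real.log_nonneg (by rw [le_div_iff₀ hε0]; linarith)
    linarith
  set E := Real.exp (ε ^ 2 * x)
  have hE_cube : 1 ≤ ε ^ 3 * E := by
    have : ε ^ 3 * E = Real.exp (3 * Real.log ε + ε ^ 2 * x) := by
      rw [Real.exp_add, show (3 : ℝ) = (3 : ℕ) by norm_num, Real.exp_nat_mul,
        Real.exp_log hε0]
    rw [this, Real.one_le_exp_iff]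
    rw [one_div, Real.log_inv] at hlog
    linarith
  have hεE : 1 ≤ ε * E := hE_cube.trans <| by
    gcongr ?_ * E
    calc ε ^ 3 ≤ ε ^ 1 := pow_le_pow_of_le_one hε0.le hε1 (by norm_num)
      _ = ε := pow_one ε
  have hE_lin : 1 + ε ^ 2 * x ≤ E := by linarith [Real.add_one_le_exp (ε ^ 2 * x)]
  have hexp : Real.exp (-2 * ε ^ 2 * x) = 1 / (E * E) := by
    rw [one_div, ← Real.exp_add, ← Real.exp_neg]; ring_nf
  rw [hexp, div_le_div_iff₀ (by positivity) (by positivity)]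
  calc 1 * (1 + x) ≤ ε * E + ε ^ 3 * E * x := by
        nlinarith [mul_le_mul_of_nonneg_right hE_cube hx0]
    _ = ε * E * (1 + ε ^ 2 * x) := by ring
    _ ≤ ε * (E * E) := by rw [← mul_assoc]; gcongr

namespace SimpleGraph

variable {V : Type*} (G : SimpleGraph V) [DecidableRel G.Adj]

noncomputable def caroWeiSum (S : Finset V) : ℝ :=
  ∑ u ∈ S, 1 / (1 + #{w ∈ S | G.Adj u w} : ℝ)

variable {G}

lemma sum_one_div_le_caroWeiSum {S T : Finset V} (hTS : T ⊆ S) :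
    ∑ u ∈ T, 1 / (1 + #{w ∈ S | G.Adj u w} : ℝ) ≤ G.caroWeiSum T := by
  refine sum_le_sum fun u _ => one_div_le_one_div_of_le (by positivity) ?_
  gcongr

variable [DecidableEq V]

lemma sum_insert_neighbors_le_one {S : Finset V} {v : V} (hv : v ∈ S)
    (hmin : ∀ u ∈ S, #{w ∈ S | G.Adj v w} ≤ #{w ∈ S | G.Adj u w}) :
    ∑ u ∈ insert v {w ∈ S | G.Adj v w}, 1 / (1 + #{w ∈ S | G.Adj u w} : ℝ) ≤ 1 := by
  have hS : insert v {w ∈ S | G.Adj v w} ⊆ S := insert_subset hv (filter_subset _ _)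
  set d := #{w ∈ S | G.Adj v w}
  calc ∑ u ∈ insert v {w ∈ S | G.Adj v w}, 1 / (1 + #{w ∈ S | G.Adj u w} : ℝ)
      ≤ ∑ _u ∈ insert v {w ∈ S | G.Adj v w}, 1 / (1 + d : ℝ) :=
        sum_le_sum fun u hu => one_div_le_one_div_of_le (by positivity) (by
          gcongr; exact hmin u (hS hu))
    _ ≤ (1 + d) * (1 / (1 + d : ℝ)) := by
        rw [sum_const, nsmul_eq_mul]
        gcongr
        norm_cast
        rw [add_comm]
        exact card_insert_le _ _
    _ = 1 := by field_simp

/-- Greedy: keep a vertex of minimum degree in `S` and delete its closed neighbourhood, whose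
terms contribute at most `1` to the sum. -/
lemma exists_isIndepSet_caroWeiSum_le (S : Finset V) :
    ∃ I ⊆ S, G.IsIndepSet I ∧ G.caroWeiSum S ≤ #I := by
  induction S using Finset.strongInduction with
  | _ S ih =>
    obtain rfl | hne := S.eq_empty_or_nonempty
    · exact ⟨∅, subset_rfl, by simp, by simp [caroWeiSum]⟩
    obtain ⟨v, hvS, hmin⟩ := S.exists_min_image (fun u => #{w ∈ S | G.Adj u w}) hne
    set N := insert v {w ∈ S | G.Adj v w}
    have hNS : N ⊆ S := insert_subset hvS (filter_subset _ _)
    obtain ⟨I, hIS, hI, hsum⟩ := ih (S \ N) (sdiff_ssubset hNS ⟨v, mem_insert_self _ _⟩)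
    have hvI : v ∉ I := fun h => (mem_sdiff.mp (hIS h)).2 (mem_insert_self _ _)
    refine ⟨insert v I, insert_subset hvS (hIS.trans sdiff_subset), ?_, ?_⟩
    · have hnadj : ∀ u ∈ I, ¬ G.Adj v u := fun u hu hadj =>
        (mem_sdiff.mp (hIS hu)).2 <|
          mem_insert_of_mem (mem_filter.mpr ⟨(mem_sdiff.mp (hIS hu)).1, hadj⟩)
      rw [coe_insert, isIndepSet_iff, Set.pairwise_insert]
      exact ⟨hI, fun u hu _ => ⟨hnadj u hu, fun h => hnadj u hu h.symm⟩⟩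
    · rw [caroWeiSum, ← sum_sdiff hNS, card_insert_of_notMem hvI, Nat.cast_succ]
      linarith [sum_one_div_le_caroWeiSum (G := G) (sdiff_subset (s := S) (t := N)),
        sum_insert_neighbors_le_one hvS hmin]

variable [Fintype V]

theorem sum_one_div_one_add_degree_le_indepNum :
    ∑ v, 1 / (1 + G.degree v : ℝ) ≤ G.indepNum := by
  obtain ⟨I, -, hI, hsum⟩ := G.exists_isIndepSet_caroWeiSum_le univ
  calc ∑ v, 1 / (1 + G.degree v : ℝ) = G.caroWeiSum univ := by
        simp [caroWeiSum, ← neighborFinset_eq_filter, card_neighborFinset_eq_degree]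
    _ ≤ #I := hsum
    _ ≤ G.indepNum := Nat.cast_le.mpr hI.card_le_indepNum

end SimpleGraph

lemma eq_indicator_one_of_forall_eq_zero_or_one {Ω : Type*} {f : Ω → ℝ}
    (hf : ∀ ω, f ω = 0 ∨ f ω = 1) : f = {ω | f ω = 1}.indicator 1 := by
  ext ω
  rcases hf ω with h | h <;> simp [Set.indicator, h]

theorem expected_bad_vertices_general {V : Type*} [Fintype V] [DecidableEq V]
    (G : SimpleGraph V) [DecidableRel G.Adj]
    (C : Finset V)
    (hCmax : ∀ D : Finset V, (∀ u ∈ D, ∀ v ∈ D, ¬ G.Adj u v) → D.card ≤ C.card)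
    {ε : ℝ} (hε0 : 0 < ε) (hε : ε ≤ 1/4)
    {Δ : ℝ} (hΔ : 3 * Real.log (1/ε) / ε ^ 2 ≤ Δ)
    {Ω : Type*} [MeasurableSpace Ω] (μ : Measure Ω) [IsProbabilityMeasure μ]
    (X : V → Ω → ℝ) (hmeas : ∀ v, Measurable (X v))
    (hvals : ∀ v ω, X v ω = 0 ∨ X v ω = 1)
    (hbad : ∀ v ∈ Finset.univ.filter (fun v => Δ ≤ (G.degree v : ℝ) ∧ v ∉ C),
      μ {ω | X v ω = 1} ≤ ENNReal.ofReal (Real.exp (-2 * ε ^ 2 * G.degree v))) :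
    (∫ ω, ∑ v ∈ Finset.univ.filter (fun v => Δ ≤ (G.degree v : ℝ) ∧ v ∉ C), X v ω ∂μ)
      ≤ ε * C.card := by
  set T := univ.filter (fun v => Δ ≤ (G.degree v : ℝ) ∧ v ∉ C)
  have hX v : X v = {ω | X v ω = 1}.indicator 1 :=
    eq_indicator_one_of_forall_eq_zero_or_one (hvals v)
  have hmeasSet v : MeasurableSet {ω | X v ω = 1} := hmeas v (measurableSet_singleton 1)
  have hint v : Integrable (X v) μ := by
    rw [hX v]; exact (integrable_const 1).indicator (hmeasSet v)
  have hindepNum : (G.indepNum : ℝ) ≤ #C := by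
    obtain ⟨I, hI⟩ := G.exists_isNIndepSet_indepNum
    rw [← hI.card_eq]
    exact_mod_cast hCmax I fun u hu v hv h => hI.isIndepSet hu hv (G.ne_of_adj h) h
  calc ∫ ω, ∑ v ∈ T, X v ω ∂μ = ∑ v ∈ T, μ.real {ω | X v ω = 1} := by
        rw [integral_finsetSum T fun v _ => hint v]
        refine sum_congr rfl fun v _ => ?_
        have h := integral_indicator_one (μ := μ) (hmeasSet v)
        rwa [← hX v] at h
    _ ≤ ∑ v ∈ T, ε * (1 / (1 + G.degree v)) := sum_le_sum fun v hv => by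
        rw [mul_one_div]
        exact (ENNReal.toReal_le_of_le_ofReal (Real.exp_nonneg _) (hbad v hv)).trans
          (exp_neg_two_mul_le_div_one_add hε0 (by linarith) (hΔ.trans (mem_filter.mp hv).2.1))
    _ ≤ ε * ∑ v, 1 / (1 + G.degree v : ℝ) := by
        rw [← mul_sum]
        gcongr
        exact filter_subset _ _
    _ ≤ ε * #C := by
        gcongr
        exact G.sum_one_div_one_add_degree_le_indepNum.trans hindepNum

/-- The expected number of bad high-degree vertices outside a maximum independent set
is at most ε·α(G). -/
theorem expected_bad_vertices {V : Type*} [Fintype V] [DecidableEq V]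
    (G : SimpleGraph V) [DecidableRel G.Adj]
    (C : Finset V) (hCindep : ∀ u ∈ C, ∀ v ∈ C, ¬ G.Adj u v)
    (hCmax : ∀ D : Finset V, (∀ u ∈ D, ∀ v ∈ D, ¬ G.Adj u v) → D.card ≤ C.card)
    {ε : ℝ} (hε0 : 0 < ε) (hε : ε ≤ 1/4)
    {Δ : ℝ} (hΔ : 3 * Real.log (1/ε) / ε ^ 2 ≤ Δ)
    {Ω : Type*} [MeasurableSpace Ω] (μ : Measure Ω) [IsProbabilityMeasure μ]
    (X : V → Ω → ℝ) (hmeas : ∀ v, Measurable (X v))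
    (hvals : ∀ v ω, X v ω = 0 ∨ X v ω = 1)
    (hbad : ∀ v ∈ Finset.univ.filter (fun v => Δ ≤ (G.degree v : ℝ) ∧ v ∉ C),
      μ {ω | X v ω = 1} ≤ ENNReal.ofReal (Real.exp (-2 * ε ^ 2 * G.degree v)))
    (hindep : iIndepFun
      (fun v : {v : V // Δ ≤ (G.degree v : ℝ) ∧ v ∉ C} => X v) μ) :
    (∫ ω, ∑ v ∈ Finset.univ.filter (fun v => Δ ≤ (G.degree v : ℝ) ∧ v ∉ C), X v ω ∂μ)
      ≤ ε * C.card :=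
  expected_bad_vertices_general G C hCmax hε0 hε hΔ μ X hmeas hvals hbad
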